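/- Setting N_i := |p_i² - D q_i²| = (-1)^{i+1}(p_i² - D q_i²), the recurrence N_i = 2√D / c_{i+1} − N_{i-1} / c_{i+1}² holds for all i ≥ 0. -/

import Mathlib

/-!
With `e i = p i - √D q i` and `f i = p i + √D q i` we have `p i ^ 2 - D q i ^ 2 = e i * f i`.
The classical identity `√D = (c (i+1) p i + p (i-1)) / (c (i+1) q i + q (i-1))` together with the
determinant `p i q (i-1) - p (i-1) q i = (-1) ^ (i+1)` gives `(-1) ^ (i+1) e i = 1 / (c (i+1) q i + q (i-1))`,
which fixes the sign of the norm, and `e (i-1) = -c (i+1) e i`, which turns the norm at `i - 1` into the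
one at `i`; the recurrence is then a field identity.
-/

open Real

section ContinuedFraction

variable {ξ : ℝ} {u : ℤ → ℤ} {c : ℤ → ℝ}

theorem irrational_completeQuotient (hξ : Irrational ξ) (hc0 : c 0 = ξ)
    (hcrec : ∀ i : ℤ, 0 ≤ i → c (i + 1) = 1 / (c i - u i)) :
    ∀ i : ℤ, 0 ≤ i → Irrational (c i) := by
  refine Int.leInduction (hc0 ▸ hξ) fun i hi ih => ?_
  rw [hcrec i hi, one_div]
  exact (ih.sub_intCast (u i)).inv

theorem completeQuotient_sub_floor_pos (hu : ∀ i : ℤ, 0 ≤ i → u i = ⌊c i⌋) {i : ℤ} (hi : 0 ≤ i)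
    (hirr : Irrational (c i)) : 0 < c i - u i := by
  rw [hu i hi, Int.self_sub_floor, Int.fract_pos]
  exact hirr.ne_int _

theorem convergent_det {p q : ℤ → ℤ} (hpm : p (-1) = 1) (hqm : q (-1) = 0) (hq0 : q 0 = 1)
    (hprec : ∀ i : ℤ, 0 ≤ i → p (i + 1) = u (i + 1) * p i + p (i - 1))
    (hqrec : ∀ i : ℤ, 0 ≤ i → q (i + 1) = u (i + 1) * q i + q (i - 1)) :
    ∀ i : ℤ, 0 ≤ i → (p i : ℝ) * q (i - 1) - p (i - 1) * q i = (-1) ^ (i + 1) := by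
  refine Int.leInduction ?_ fun i hi ih => ?_
  · norm_num [hpm, hqm, hq0]
  · rw [add_sub_cancel_right, hprec i hi, hqrec i hi, zpow_add_one₀ (by norm_num), ← ih]
    push_cast
    ring

theorem convergent_value {p q : ℤ → ℤ} (hc0 : c 0 = ξ)
    (hstep : ∀ i : ℤ, 0 ≤ i → c (i + 1) * (c i - u i) = 1)
    (hpm : p (-1) = 1) (hqm : q (-1) = 0) (hp0 : p 0 = u 0) (hq0 : q 0 = 1)
    (hprec : ∀ i : ℤ, 0 ≤ i → p (i + 1) = u (i + 1) * p i + p (i - 1))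
    (hqrec : ∀ i : ℤ, 0 ≤ i → q (i + 1) = u (i + 1) * q i + q (i - 1)) :
    ∀ i : ℤ, 0 ≤ i → ξ * (c (i + 1) * q i + q (i - 1)) = c (i + 1) * p i + p (i - 1) := by
  refine Int.leInduction ?_ fun i hi ih => ?_
  · have h := hstep 0 le_rfl
    rw [hc0, zero_add] at h
    norm_num [hpm, hqm, hp0, hq0]
    linear_combination h
  · rw [add_sub_cancel_right, hprec i hi, hqrec i hi]
    push_cast
    linear_combination c (i + 1 + 1) * ih + (p i - ξ * q i) * hstep (i + 1) (by omega)

end ContinuedFraction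

theorem le_of_linear_recurrence {u a : ℤ → ℤ} {b : ℤ} (hb : 0 ≤ b) (hm : b ≤ a (-1)) (h0 : b ≤ a 0)
    (hu : ∀ i : ℤ, 0 ≤ i → 0 ≤ u (i + 1))
    (hrec : ∀ i : ℤ, 0 ≤ i → a (i + 1) = u (i + 1) * a i + a (i - 1)) :
    ∀ i : ℤ, 0 ≤ i → b ≤ a (i - 1) ∧ b ≤ a i := by
  refine Int.leInduction ⟨hm, h0⟩ fun i hi ⟨ih₁, ih₂⟩ => ⟨by simpa using ih₂, ?_⟩
  rw [hrec i hi]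
  nlinarith [hu i hi]

theorem abs_sq_sub_mul_sq_eq {x P Q s : ℝ} (hs : |s| = 1) (he : 0 < s * (P - x * Q))
    (hf : 0 < P + x * Q) : |P ^ 2 - x ^ 2 * Q ^ 2| = s * (P ^ 2 - x ^ 2 * Q ^ 2) := by
  have hpos : 0 < s * (P ^ 2 - x ^ 2 * Q ^ 2) := by
    rw [show s * (P ^ 2 - x ^ 2 * Q ^ 2) = s * (P - x * Q) * (P + x * Q) by ring]
    positivity
  rw [← abs_of_pos hpos, abs_mul, hs, one_mul]

theorem abs_sq_sub_mul_sq_recurrence {x c P Q P' Q' s : ℝ} (hs : |s| = 1) (hx : 0 ≤ x) (hc : 0 < c)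
    (hP : 0 < P) (hQ : 0 ≤ Q) (hP' : 0 < P') (hQ' : 0 ≤ Q')
    (hX : x * (c * Q + Q') = c * P + P') (hdet : P * Q' - P' * Q = s) :
    |P ^ 2 - x ^ 2 * Q ^ 2| = s * (P ^ 2 - x ^ 2 * Q ^ 2) ∧
      |P ^ 2 - x ^ 2 * Q ^ 2| = 2 * x / c - |P' ^ 2 - x ^ 2 * Q' ^ 2| / c ^ 2 := by
  have hs2 : s ^ 2 = 1 := by rw [← sq_abs, hs, one_pow]
  have hE : s * (P - x * Q) * (c * Q + Q') = 1 := by linear_combination s * hdet - s * Q * hX + hs2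
  have he : 0 < s * (P - x * Q) := pos_of_mul_pos_left (hE ▸ one_pos) (by positivity)
  have he' : 0 < -s * (P' - x * Q') := by
    rw [show -s * (P' - x * Q') = c * (s * (P - x * Q)) by linear_combination s * hX]
    positivity
  have hN := abs_sq_sub_mul_sq_eq hs he (by positivity)
  have hN' := abs_sq_sub_mul_sq_eq (by rwa [abs_neg]) he' (by positivity)
  refine ⟨hN, ?_⟩
  obtain rfl : P' = x * (c * Q + Q') - c * P := by linear_combination -hX
  rw [hN, hN', div_sub_div _ _ hc.ne' (by positivity), eq_div_iff (by positivity)]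
  linear_combination 2 * x * c ^ 2 * hE

theorem not_isSquare_of_mod_four {D : ℕ} (hD4 : D % 4 = 2 ∨ D % 4 = 3) : ¬IsSquare D := by
  rintro ⟨k, rfl⟩
  have := Nat.mul_mod k k 4
  have : k % 4 < 4 := Nat.mod_lt _ (by norm_num)
  interval_cases k % 4 <;> omega

theorem stmt2_general (D : ℕ) (hD4 : D % 4 = 2 ∨ D % 4 = 3)
    (u : ℤ → ℤ) (c : ℤ → ℝ)
    (hc0 : c 0 = Real.sqrt D)
    (hu : ∀ i : ℤ, 0 ≤ i → u i = ⌊c i⌋)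
    (hcrec : ∀ i : ℤ, 0 ≤ i → c (i + 1) = 1 / (c i - u i))
    (p q : ℤ → ℤ)
    (hpm : p (-1) = 1) (hqm : q (-1) = 0)
    (hp0 : p 0 = u 0) (hq0 : q 0 = 1)
    (hprec : ∀ i : ℤ, 0 ≤ i → p (i + 1) = u (i + 1) * p i + p (i - 1))
    (hqrec : ∀ i : ℤ, 0 ≤ i → q (i + 1) = u (i + 1) * q i + q (i - 1)) :
    ∀ i : ℤ, 0 ≤ i →
      |(p (i) : ℝ) ^ 2 - (D : ℝ) * (q (i) : ℝ) ^ 2| = (-1 : ℝ) ^ (i + 1) * ((p (i) : ℝ) ^ 2 - (D : ℝ) * (q (i) : ℝ) ^ 2) ∧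
      |(p (i) : ℝ) ^ 2 - (D : ℝ) * (q (i) : ℝ) ^ 2|
        = 2 * Real.sqrt D / c (i + 1) - |(p (i - 1) : ℝ) ^ 2 - (D : ℝ) * (q (i - 1) : ℝ) ^ 2| / c (i + 1) ^ 2 := by
  intro i hi
  have hirr := irrational_completeQuotient (irrational_sqrt_natCast_iff.mpr
    (not_isSquare_of_mod_four hD4)) hc0 hcrec
  have hfract : ∀ i : ℤ, 0 ≤ i → 0 < c i - u i := fun i hi =>
    completeQuotient_sub_floor_pos hu hi (hirr i hi)
  have hstep : ∀ i : ℤ, 0 ≤ i → c (i + 1) * (c i - u i) = 1 := fun i hi => by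
    rw [hcrec i hi, one_div, inv_mul_cancel₀ (hfract i hi).ne']
  have hcpos : ∀ i : ℤ, 0 ≤ i → 0 < c (i + 1) := fun i hi => by
    rw [hcrec i hi]; exact one_div_pos.mpr (hfract i hi)
  have hu_succ : ∀ i : ℤ, 0 ≤ i → 0 ≤ u (i + 1) := fun i hi => by
    rw [hu (i + 1) (by omega)]; exact Int.floor_nonneg.mpr (hcpos i hi).le
  have hu0 : 1 ≤ u 0 := by
    rw [hu 0 le_rfl, Int.le_floor, hc0, Int.cast_one, Real.one_le_sqrt]
    exact_mod_cast (by omega : 1 ≤ D)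
  obtain ⟨hp', hp⟩ := le_of_linear_recurrence zero_le_one hpm.ge (hp0 ▸ hu0) hu_succ hprec i hi
  obtain ⟨hq', hq⟩ := le_of_linear_recurrence le_rfl hqm.ge (hq0 ▸ zero_le_one) hu_succ hqrec i hi
  have key := abs_sq_sub_mul_sq_recurrence (s := (-1 : ℝ) ^ (i + 1)) (by simp) (sqrt_nonneg _)
    (hcpos i hi) (by exact_mod_cast hp) (by exact_mod_cast hq) (by exact_mod_cast hp')
    (by exact_mod_cast hq') (convergent_value hc0 hstep hpm hqm hp0 hq0 hprec hqrec i hi)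
    (convergent_det hpm hqm hq0 hprec hqrec i hi)
  rwa [sq_sqrt (Nat.cast_nonneg D)] at key

theorem stmt2 (D : ℕ) (hDsf : Squarefree D) (hD4 : D % 4 = 2 ∨ D % 4 = 3)
    (u : ℤ → ℤ) (c : ℤ → ℝ)
    (hc0 : c 0 = Real.sqrt D)
    (hu : ∀ i : ℤ, 0 ≤ i → u i = ⌊c i⌋)
    (hcrec : ∀ i : ℤ, 0 ≤ i → c (i + 1) = 1 / (c i - u i))
    (p q : ℤ → ℤ)
    (hpm : p (-1) = 1) (hqm : q (-1) = 0)
    (hp0 : p 0 = u 0) (hq0 : q 0 = 1)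
    (hprec : ∀ i : ℤ, 0 ≤ i → p (i + 1) = u (i + 1) * p i + p (i - 1))
    (hqrec : ∀ i : ℤ, 0 ≤ i → q (i + 1) = u (i + 1) * q i + q (i - 1)) :
    ∀ i : ℤ, 0 ≤ i →
      |(p (i) : ℝ) ^ 2 - (D : ℝ) * (q (i) : ℝ) ^ 2| = (-1 : ℝ) ^ (i + 1) * ((p (i) : ℝ) ^ 2 - (D : ℝ) * (q (i) : ℝ) ^ 2) ∧
      |(p (i) : ℝ) ^ 2 - (D : ℝ) * (q (i) : ℝ) ^ 2|
        = 2 * Real.sqrt D / c (i + 1) - |(p (i - 1) : ℝ) ^ 2 - (D : ℝ) * (q (i - 1) : ℝ) ^ 2| / c (i + 1) ^ 2 :=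
  stmt2_general D hD4 u c hc0 hu hcrec p q hpm hqm hp0 hq0 hprec hqrec
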